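/- arXiv:2104.04880 — 7 statements merged into one kernel-verified Lean document; each statement's English description precedes it below -/
import Mathlib

section
/- Let N be the v×v incidence matrix of a symmetric (v_k) configuration (each row and column sum equals k, and the inner product of any two distinct rows is at most 1). If N is invertible and N·Nᵗ - k·I satisfies the strongly regular equation A² = k(k-1)·I + λ·A + μ·(J - I - A), then Nᵗ·N - k·I satisfies the same equation. -/
open Matrix

/-- If the incidence matrix `N` of a symmetric configuration is invertible and
`N Nᵗ - k I` satisfies the strongly regular equation, then so does `Nᵗ N - k I`. -/
theorem stmt_3 (v k l m : ℕ) (N : Matrix (Fin v) (Fin v) ℚ)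
    (h01 : ∀ i j, N i j = 0 ∨ N i j = 1)
    (hrow : ∀ i, ∑ j, N i j = (k : ℚ))
    (hcol : ∀ j, ∑ i, N i j = (k : ℚ))
    (hinner : ∀ i j, i ≠ j → ∑ t, N i t * N j t ≤ 1)
    (hinv : IsUnit N)
    (J : Matrix (Fin v) (Fin v) ℚ) (hJ : J = Matrix.of fun _ _ => (1 : ℚ))
    (hA : (N * Nᵀ - (k : ℚ) • 1) ^ 2 =
        ((k : ℚ) * ((k : ℚ) - 1)) • (1 : Matrix (Fin v) (Fin v) ℚ)
          + (l : ℚ) • (N * Nᵀ - (k : ℚ) • 1)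
          + (m : ℚ) • (J - 1 - (N * Nᵀ - (k : ℚ) • 1))) :
    (Nᵀ * N - (k : ℚ) • 1) ^ 2 =
        ((k : ℚ) * ((k : ℚ) - 1)) • (1 : Matrix (Fin v) (Fin v) ℚ)
          + (l : ℚ) • (Nᵀ * N - (k : ℚ) • 1)
          + (m : ℚ) • (J - 1 - (Nᵀ * N - (k : ℚ) • 1)) := by
  rcases Nat.eq_zero_or_pos v with hv | hv
  · subst hv
    apply Subsingleton.elim
  haveI : Nonempty (Fin v) := ⟨⟨0, hv⟩⟩
  haveI : Invertible N := hinv.invertible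
  -- k ≠ 0
  have hk : (k : ℚ) ≠ 0 := by
    intro hk0
    have hN0 : N = 0 := by
      ext i j
      have hsum : ∑ t, N i t = 0 := by rw [hrow i, hk0]
      have := (Finset.sum_eq_zero_iff_of_nonneg (fun t _ => by
        rcases h01 i t with h | h <;> simp [h])).mp hsum j (Finset.mem_univ j)
      simpa using this
    rw [hN0] at hinv
    have : IsUnit (0 : Matrix (Fin v) (Fin v) ℚ).det := hinv.map detMonoidHom
    simp [Matrix.det_zero] at this
  have hNJ : N * J = (k : ℚ) • J := by
    ext i j
    simp [hJ, Matrix.mul_apply, hrow i]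
  have hJN : J * N = (k : ℚ) • J := by
    ext i j
    simp [hJ, Matrix.mul_apply, hcol j]
  have hMJ : ⅟N * J = (k : ℚ)⁻¹ • J := by
    have h1 : ⅟N * (N * J) = J := by
      rw [← mul_assoc, invOf_mul_self, one_mul]
    rw [hNJ, Matrix.mul_smul] at h1
    calc ⅟N * J = (k : ℚ)⁻¹ • ((k : ℚ) • (⅟N * J)) := by
          rw [smul_smul, inv_mul_cancel₀ hk, one_smul]
      _ = (k : ℚ)⁻¹ • J := by rw [h1]
  have hMJN : ⅟N * J * N = J := by
    rw [hMJ, Matrix.smul_mul, hJN, smul_smul, inv_mul_cancel₀ hk, one_smul]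
  set A := N * Nᵀ - (k : ℚ) • (1 : Matrix (Fin v) (Fin v) ℚ) with hAdef
  have hB : Nᵀ * N - (k : ℚ) • (1 : Matrix (Fin v) (Fin v) ℚ) = ⅟N * A * N := by
    rw [hAdef, Matrix.mul_sub, Matrix.sub_mul, ← mul_assoc, invOf_mul_self, one_mul,
      Matrix.mul_smul, mul_one, Matrix.smul_mul, invOf_mul_self]
  have hsq : (Nᵀ * N - (k : ℚ) • (1 : Matrix (Fin v) (Fin v) ℚ)) ^ 2 = ⅟N * A ^ 2 * N := by
    rw [hB, pow_two, pow_two]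
    have : ⅟N * A * N * (⅟N * A * N) = ⅟N * A * (N * ⅟N) * A * N := by
      noncomm_ring
    rw [this, mul_invOf_self, mul_one, mul_assoc (⅟N) A A, ← mul_assoc]
  rw [hsq, hA, hB]
  rw [Matrix.mul_add, Matrix.mul_add, Matrix.add_mul, Matrix.add_mul]
  congr 1
  · congr 1
    · rw [Matrix.mul_smul, Matrix.smul_mul, mul_one, invOf_mul_self]
    · rw [Matrix.mul_smul, Matrix.smul_mul]
  · rw [Matrix.mul_smul, Matrix.smul_mul]
    congr 1
    rw [Matrix.mul_sub, Matrix.sub_mul, Matrix.mul_sub, Matrix.sub_mul, mul_one, invOf_mul_self,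
      hMJN]
end

section
/- Let ℓ be a fixed line of a strongly regular (v_k; λ, μ) configuration, and for each point P not on ℓ let α_P be the number of lines through P meeting ℓ. Then the sum over P not on ℓ of α_P(α_P - 1) equals k(k-1)(λ - k + 2). -/
/-- In a strongly regular `(v_k; λ, μ)` configuration, for a fixed line `ℓ`, the sum over
points `P ∉ ℓ` of `α_P (α_P - 1)` equals `k(k-1)(λ - k + 2)`. -/
theorem stmt_6 {Pt Ln : Type*} [Fintype Pt] [Fintype Ln] [DecidableEq Pt]
    (Inc : Pt → Ln → Prop) [∀ p l, Decidable (Inc p l)]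
    (v k lam mu : ℕ) (hk : 3 ≤ k)
    (hv : Fintype.card Pt = v) (hb : Fintype.card Ln = v)
    (hpls : ∀ p q : Pt, p ≠ q →
      (Finset.univ.filter (fun l : Ln => Inc p l ∧ Inc q l)).card ≤ 1)
    (hpdeg : ∀ p : Pt, (Finset.univ.filter (fun l : Ln => Inc p l)).card = k)
    (hldeg : ∀ l : Ln, (Finset.univ.filter (fun p : Pt => Inc p l)).card = k)
    (hreg : ∀ p : Pt,
      (Finset.univ.filter (fun q : Pt => q ≠ p ∧ ∃ l, Inc p l ∧ Inc q l)).card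
        = k * (k - 1))
    (hlam : ∀ p q : Pt, p ≠ q → (∃ l, Inc p l ∧ Inc q l) →
      (Finset.univ.filter (fun z : Pt => z ≠ p ∧ z ≠ q ∧
        (∃ l, Inc p l ∧ Inc z l) ∧ (∃ l, Inc q l ∧ Inc z l))).card = lam)
    (hmu : ∀ p q : Pt, p ≠ q → ¬ (∃ l, Inc p l ∧ Inc q l) →
      (Finset.univ.filter (fun z : Pt => z ≠ p ∧ z ≠ q ∧
        (∃ l, Inc p l ∧ Inc z l) ∧ (∃ l, Inc q l ∧ Inc z l))).card = mu)
    (ℓ : Ln) :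
    ∑ p ∈ Finset.univ.filter (fun p : Pt => ¬ Inc p ℓ),
        (((Finset.univ.filter
            (fun m : Ln => Inc p m ∧ ∃ q : Pt, Inc q m ∧ Inc q ℓ)).card : ℤ) *
          (((Finset.univ.filter
            (fun m : Ln => Inc p m ∧ ∃ q : Pt, Inc q m ∧ Inc q ℓ)).card : ℤ) - 1))
      = (k : ℤ) * ((k : ℤ) - 1) * ((lam : ℤ) - (k : ℤ) + 2) := by
  classical
  set L : Finset Pt := Finset.univ.filter (fun q => Inc q ℓ) with hLdef
  have hLcard : L.card = k := hldeg ℓ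
  -- uniqueness of the line through two distinct points
  have uniq_line : ∀ (p q : Pt), p ≠ q → ∀ m₁ m₂ : Ln,
      Inc p m₁ → Inc q m₁ → Inc p m₂ → Inc q m₂ → m₁ = m₂ := by
    intro p q hpq m₁ m₂ h1 h2 h3 h4
    have h := hpls p q hpq
    have hm₁ : m₁ ∈ Finset.univ.filter (fun l : Ln => Inc p l ∧ Inc q l) := by
      simp [h1, h2]
    have hm₂ : m₂ ∈ Finset.univ.filter (fun l : Ln => Inc p l ∧ Inc q l) := by
      simp [h3, h4]
    exact Finset.card_le_one.mp h _ hm₁ _ hm₂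
  -- a line ≠ ℓ meets ℓ in at most one point
  have uniq_pt : ∀ (q q' : Pt) (m : Ln), m ≠ ℓ →
      Inc q m → Inc q ℓ → Inc q' m → Inc q' ℓ → q = q' := by
    intro q q' m hm h1 h2 h3 h4
    by_contra hne
    have h := hpls q q' hne
    have hmm : m ∈ Finset.univ.filter (fun l : Ln => Inc q l ∧ Inc q' l) := by
      simp [h1, h3]
    have hℓℓ : ℓ ∈ Finset.univ.filter (fun l : Ln => Inc q l ∧ Inc q' l) := by
      simp [h2, h4]
    have : 1 < (Finset.univ.filter (fun l : Ln => Inc q l ∧ Inc q' l)).card :=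
      Finset.one_lt_card.mpr ⟨m, hmm, ℓ, hℓℓ, hm⟩
    omega
  -- α_p equals the number of points of ℓ collinear with p
  have key : ∀ p : Pt, ¬ Inc p ℓ →
      (Finset.univ.filter (fun m : Ln => Inc p m ∧ ∃ q : Pt, Inc q m ∧ Inc q ℓ)).card
        = (L.filter (fun q => ∃ m, Inc p m ∧ Inc q m)).card := by
    intro p hp
    apply Finset.card_bij (fun m hm => ((Finset.mem_filter.mp hm).2.2).choose)
    · intro m hm
      obtain ⟨-, hpm, hex⟩ := Finset.mem_filter.mp hm
      obtain ⟨hq1, hq2⟩ := hex.choose_spec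
      simp only [hLdef, Finset.mem_filter, Finset.mem_univ, true_and]
      exact ⟨hq2, m, hpm, hq1⟩
    · intro m₁ hm₁ m₂ hm₂ heq
      obtain ⟨-, hpm₁, hex₁⟩ := Finset.mem_filter.mp hm₁
      obtain ⟨-, hpm₂, hex₂⟩ := Finset.mem_filter.mp hm₂
      obtain ⟨ha1, ha2⟩ := hex₁.choose_spec
      obtain ⟨hb1, hb2⟩ := hex₂.choose_spec
      have hpq : p ≠ hex₁.choose := fun h => hp (h ▸ ha2)
      exact uniq_line p hex₁.choose hpq m₁ m₂ hpm₁ ha1 hpm₂ (heq ▸ hb1)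
    · intro q hq
      simp only [hLdef, Finset.mem_filter, Finset.mem_univ, true_and] at hq
      obtain ⟨hqℓ, m, hpm, hqm⟩ := hq
      have hmA : m ∈ Finset.univ.filter
          (fun m : Ln => Inc p m ∧ ∃ q : Pt, Inc q m ∧ Inc q ℓ) := by
        simp only [Finset.mem_filter, Finset.mem_univ, true_and]
        exact ⟨hpm, q, hqm, hqℓ⟩
      refine ⟨m, hmA, ?_⟩
      obtain ⟨hc1, hc2⟩ := (Finset.mem_filter.mp hmA).2.2.choose_spec
      have hmℓ : m ≠ ℓ := fun h => hp (h ▸ hpm)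
      exact uniq_pt _ q m hmℓ hc1 hc2 hqm hqℓ
  set P' : Finset Pt := Finset.univ.filter (fun p : Pt => ¬ Inc p ℓ) with hP'def
  -- rewrite each term using offDiag of the collinear-point set
  have step1 : ∀ p ∈ P',
      (((Finset.univ.filter
          (fun m : Ln => Inc p m ∧ ∃ q : Pt, Inc q m ∧ Inc q ℓ)).card : ℤ) *
        (((Finset.univ.filter
          (fun m : Ln => Inc p m ∧ ∃ q : Pt, Inc q m ∧ Inc q ℓ)).card : ℤ) - 1))
      = ((L.offDiag.filter
          (fun x : Pt × Pt => (∃ m, Inc p m ∧ Inc x.1 m) ∧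
            (∃ m, Inc p m ∧ Inc x.2 m))).card : ℤ) := by
    intro p hp
    have hpℓ : ¬ Inc p ℓ := by
      simpa [hP'def] using hp
    rw [key p hpℓ]
    set B := L.filter (fun q => ∃ m, Inc p m ∧ Inc q m) with hBdef
    have hBoff : B.offDiag = L.offDiag.filter
        (fun x : Pt × Pt => (∃ m, Inc p m ∧ Inc x.1 m) ∧ (∃ m, Inc p m ∧ Inc x.2 m)) := by
      ext x
      simp only [Finset.mem_offDiag, Finset.mem_filter, hBdef]
      tauto
    rw [← hBoff]
    have hle : B.card ≤ B.card * B.card := by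
      rcases Nat.eq_zero_or_pos B.card with h | h
      · simp [h]
      · exact Nat.le_mul_of_pos_left _ h
    rw [Finset.offDiag_card, Nat.cast_sub hle]
    push_cast
    ring
  rw [Finset.sum_congr rfl step1]
  -- swap the order of summation
  have swap : ∑ p ∈ P', ((L.offDiag.filter
        (fun x : Pt × Pt => (∃ m, Inc p m ∧ Inc x.1 m) ∧
          (∃ m, Inc p m ∧ Inc x.2 m))).card : ℤ)
      = ∑ x ∈ L.offDiag, ((P'.filter
          (fun p => (∃ m, Inc p m ∧ Inc x.1 m) ∧ (∃ m, Inc p m ∧ Inc x.2 m))).card : ℤ) := by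
    simp_rw [Finset.card_filter]
    push_cast
    rw [Finset.sum_comm]
  rw [swap]
  -- count, for each ordered pair of distinct points of ℓ, the outside points collinear with both
  have count : ∀ x ∈ L.offDiag, ((P'.filter
      (fun p => (∃ m, Inc p m ∧ Inc x.1 m) ∧ (∃ m, Inc p m ∧ Inc x.2 m))).card : ℤ)
      = (lam : ℤ) - (k : ℤ) + 2 := by
    rintro ⟨q, r⟩ hx
    obtain ⟨hq, hr, hqr⟩ := Finset.mem_offDiag.mp hx
    have hqℓ : Inc q ℓ := by simpa [hLdef] using hq
    have hrℓ : Inc r ℓ := by simpa [hLdef] using hr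
    set Z : Finset Pt := Finset.univ.filter (fun z : Pt => z ≠ q ∧ z ≠ r ∧
        (∃ l, Inc q l ∧ Inc z l) ∧ (∃ l, Inc r l ∧ Inc z l)) with hZdef
    have hZ : Z.card = lam := hlam q r hqr ⟨ℓ, hqℓ, hrℓ⟩
    have hsplit : (Z.filter (fun z => Inc z ℓ)).card
        + (Z.filter (fun z => ¬ Inc z ℓ)).card = Z.card :=
      Finset.card_filter_add_card_filter_not _
    have hZin : Z.filter (fun z => Inc z ℓ) = (L.erase q).erase r := by
      ext z
      simp only [hZdef, hLdef, Finset.mem_filter, Finset.mem_univ, true_and,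
        Finset.mem_erase]
      constructor
      · rintro ⟨⟨h1, h2, -, -⟩, h5⟩
        exact ⟨h2, h1, h5⟩
      · rintro ⟨h2, h1, h5⟩
        exact ⟨⟨h1, h2, ⟨ℓ, hqℓ, h5⟩, ⟨ℓ, hrℓ, h5⟩⟩, h5⟩
    have hrL : r ∈ L.erase q := Finset.mem_erase.mpr ⟨fun h => hqr h.symm, hr⟩
    have hZincard : (Z.filter (fun z => Inc z ℓ)).card = k - 2 := by
      rw [hZin, Finset.card_erase_of_mem hrL, Finset.card_erase_of_mem hq, hLcard]
      omega
    have hZout : Z.filter (fun z => ¬ Inc z ℓ) = P'.filter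
        (fun p => (∃ m, Inc p m ∧ Inc q m) ∧ (∃ m, Inc p m ∧ Inc r m)) := by
      ext z
      simp only [hZdef, hP'def, Finset.mem_filter, Finset.mem_univ, true_and]
      constructor
      · rintro ⟨⟨-, -, ⟨l1, a, b⟩, ⟨l2, c, d⟩⟩, h⟩
        exact ⟨h, ⟨l1, b, a⟩, ⟨l2, d, c⟩⟩
      · rintro ⟨h, ⟨l1, a, b⟩, ⟨l2, c, d⟩⟩
        refine ⟨⟨?_, ?_, ⟨l1, b, a⟩, ⟨l2, d, c⟩⟩, h⟩
        · exact fun e => h (e ▸ hqℓ)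
        · exact fun e => h (e ▸ hrℓ)
    rw [← hZout]
    rw [hZ, hZincard] at hsplit
    omega
  rw [Finset.sum_congr rfl count, Finset.sum_const, Finset.offDiag_card, hLcard]
  have hkk : k ≤ k * k := Nat.le_mul_of_pos_left _ (by omega)
  rw [nsmul_eq_mul, Nat.cast_sub hkk]
  push_cast
  ring
end

section
/- Let P be a projective plane of order n ≥ 5 and A, B, C three non-collinear points. In the structure obtained by deleting all points on lines AB, AC, BC and all lines through A, B, C, any two remaining points P, Q that are collinear (in the remaining structure) have exactly (n-4)² + 1 remaining points collinear with both. -/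
/-!
Call the surviving points and lines residual, and let `N(P)` be the set of residual points
other than `P` that lie on a residual line through `P`. A line missing the vertices `A, B, C`
meets the three sides in three distinct points, so it carries `n - 2` residual points; dually,
`n - 2` residual lines pass through a residual point. Two residual lines through `P` share only
`P`, hence `|N(P)| = (n - 2)(n - 3)`.

Since `Q ∈ N(P)`, the common neighbours of `P` and `Q` are the points of `N(P) \ {Q}` lying
on none of the lines `QA, QB, QC`. On `QA` the sides `AB`, `AC` and the line `PA` all pass
through `A`, so the points of `N(P) \ {Q}` on `QA` are its points off the triangle `P B C`,
except `A` and `Q`: there are `n - 4` of them. The count is therefore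
`(n - 2)(n - 3) - 1 - 3(n - 4) = (n - 4)² + 1`.
-/

open Finset

section

variable {Pt Ln : Type*}

def IsLinear (Inc : Pt → Ln → Prop) : Prop :=
  ∀ ⦃p q : Pt⦄ ⦃l m : Ln⦄, Inc p l → Inc q l → Inc p m → Inc q m → p = q ∨ l = m

structure IsProjectivePlane [Fintype Pt] [Fintype Ln] (Inc : Pt → Ln → Prop)
    [∀ p l, Decidable (Inc p l)] (n : ℕ) : Prop where
  isLinear : IsLinear Inc
  exists_join : ∀ p q : Pt, p ≠ q → ∃ l, Inc p l ∧ Inc q l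
  exists_meet : ∀ l m : Ln, l ≠ m → ∃ p, Inc p l ∧ Inc p m
  card_points : ∀ l, #{p | Inc p l} = n + 1
  card_lines : ∀ p, #{l | Inc p l} = n + 1

structure IsTriangle (Inc : Pt → Ln → Prop) (A B C : Pt) (lAB lAC lBC : Ln) : Prop where
  inc_lAB : Inc A lAB ∧ Inc B lAB
  inc_lAC : Inc A lAC ∧ Inc C lAC
  inc_lBC : Inc B lBC ∧ Inc C lBC
  not_inc_lAB : ¬ Inc C lAB
  not_inc_lAC : ¬ Inc B lAC
  not_inc_lBC : ¬ Inc A lBC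

def residualNeighbors [Fintype Pt] [Fintype Ln] [DecidableEq Pt] (Inc : Pt → Ln → Prop)
    [∀ p l, Decidable (Inc p l)] (A B C : Pt) (lAB lAC lBC : Ln) (P : Pt) : Finset Pt :=
  {z | (¬ Inc z lAB ∧ ¬ Inc z lAC ∧ ¬ Inc z lBC) ∧ z ≠ P ∧
    ∃ l, (¬ Inc A l ∧ ¬ Inc B l ∧ ¬ Inc C l) ∧ Inc P l ∧ Inc z l}

variable {Inc : Pt → Ln → Prop}

namespace IsLinear

theorem of_existsUnique (h : ∀ p q : Pt, p ≠ q → ∃! l : Ln, Inc p l ∧ Inc q l) :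
    IsLinear Inc := by
  intro p q l m hpl hql hpm hqm
  by_cases hpq : p = q
  · exact Or.inl hpq
  · exact Or.inr ((h p q hpq).unique ⟨hpl, hql⟩ ⟨hpm, hqm⟩)

theorem dual (h : IsLinear Inc) : IsLinear fun (l : Ln) (p : Pt) => Inc p l :=
  fun _ _ _ _ hpl hql hpm hqm => (h hpl hpm hql hqm).symm

theorem eq_of_inc (h : IsLinear Inc) {p q : Pt} {l m : Ln} (hpq : p ≠ q) (hpl : Inc p l)
    (hql : Inc q l) (hpm : Inc p m) (hqm : Inc q m) : l = m :=
  (h hpl hql hpm hqm).resolve_left hpq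

theorem not_inc_of_not_inc (h : IsLinear Inc) {A B P : Pt} {l m : Ln} (hAB : A ≠ B)
    (hAl : Inc A l) (hBl : Inc B l) (hPl : ¬ Inc P l) (hPm : Inc P m) (hBm : Inc B m) :
    ¬ Inc A m :=
  fun hAm => hPl (h.eq_of_inc hAB hAm hBm hAl hBl ▸ hPm)

theorem disjoint_filter_inc_erase [DecidableEq Pt] [∀ p l, Decidable (Inc p l)]
    (h : IsLinear Inc) (s : Finset Pt) ⦃Q : Pt⦄ ⦃l m : Ln⦄ (hQl : Inc Q l) (hQm : Inc Q m)
    (hlm : l ≠ m) : Disjoint {z ∈ s.erase Q | Inc z l} {z ∈ s.erase Q | Inc z m} :=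
  disjoint_filter.2 fun _ hz hzl hzm => ne_of_mem_erase hz ((h hzl hQl hzm hQm).resolve_right hlm)

theorem inc_iff_eq (h : IsLinear Inc) {X z : Pt} {l m : Ln} (hlm : l ≠ m) (hXl : Inc X l)
    (hXm : Inc X m) (hzl : Inc z l) : Inc z m ↔ z = X :=
  ⟨fun hzm => (h hzl hXl hzm hXm).resolve_right hlm, fun hzX => hzX ▸ hXm⟩

theorem inc_iff_inc (h : IsLinear Inc) {P z A : Pt} {l m : Ln} (hzP : z ≠ P) (hAP : A ≠ P)
    (hPl : Inc P l) (hzl : Inc z l) (hPm : Inc P m) (hAm : Inc A m) : Inc A l ↔ Inc z m := by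
  constructor
  · intro hAl
    obtain h' | rfl := h hAl hPl hAm hPm
    exacts [absurd h' hAP, hzl]
  · intro hzm
    obtain h' | rfl := h hzl hPl hzm hPm
    exacts [absurd h' hzP, hAm]

end IsLinear

namespace IsTriangle

variable {A B C : Pt} {lAB lAC lBC : Ln}

theorem dual (hT : IsTriangle Inc A B C lAB lAC lBC) :
    IsTriangle (fun l p => Inc p l) lAB lAC lBC A B C :=
  ⟨⟨hT.inc_lAB.1, hT.inc_lAC.1⟩, ⟨hT.inc_lAB.2, hT.inc_lBC.1⟩, ⟨hT.inc_lAC.2, hT.inc_lBC.2⟩,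
    hT.not_inc_lBC, hT.not_inc_lAC, hT.not_inc_lAB⟩

theorem lAB_ne_lAC (hT : IsTriangle Inc A B C lAB lAC lBC) :
    lAB ≠ lAC := fun h => hT.not_inc_lAC (h ▸ hT.inc_lAB.2)
theorem lAB_ne_lBC (hT : IsTriangle Inc A B C lAB lAC lBC) :
    lAB ≠ lBC := fun h => hT.not_inc_lBC (h ▸ hT.inc_lAB.1)
theorem lAC_ne_lBC (hT : IsTriangle Inc A B C lAB lAC lBC) :
    lAC ≠ lBC := fun h => hT.not_inc_lBC (h ▸ hT.inc_lAC.1)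
theorem A_ne_B (hT : IsTriangle Inc A B C lAB lAC lBC) :
    A ≠ B := fun h => hT.not_inc_lBC (h ▸ hT.inc_lBC.1)
theorem A_ne_C (hT : IsTriangle Inc A B C lAB lAC lBC) :
    A ≠ C := fun h => hT.not_inc_lBC (h ▸ hT.inc_lBC.2)
theorem B_ne_C (hT : IsTriangle Inc A B C lAB lAC lBC) :
    B ≠ C := fun h => hT.not_inc_lAC (h ▸ hT.inc_lAC.2)

theorem swap_AB (hT : IsTriangle Inc A B C lAB lAC lBC) :
    IsTriangle Inc B A C lAB lBC lAC :=
  ⟨hT.inc_lAB.symm, hT.inc_lBC, hT.inc_lAC, hT.not_inc_lAB, hT.not_inc_lBC, hT.not_inc_lAC⟩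

theorem swap_AC (hT : IsTriangle Inc A B C lAB lAC lBC) :
    IsTriangle Inc C B A lBC lAC lAB :=
  ⟨hT.inc_lBC.symm, hT.inc_lAC.symm, hT.inc_lAB.symm, hT.not_inc_lBC, hT.not_inc_lAC,
    hT.not_inc_lAB⟩

theorem replace_A (hT : IsTriangle Inc A B C lAB lAC lBC) (hlin : IsLinear Inc) {P : Pt}
    {lPB lPC : Ln} (hP : ¬ Inc P lBC) (hPB : Inc P lPB ∧ Inc B lPB)
    (hPC : Inc P lPC ∧ Inc C lPC) : IsTriangle Inc P B C lPB lPC lBC :=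
  ⟨hPB, hPC, hT.inc_lBC,
    hlin.not_inc_of_not_inc hT.B_ne_C.symm hT.inc_lBC.2 hT.inc_lBC.1 hP hPB.1 hPB.2,
    hlin.not_inc_of_not_inc hT.B_ne_C hT.inc_lBC.1 hT.inc_lBC.2 hP hPC.1 hPC.2, hP⟩

theorem card_filter_inc_off_sides_add_three [Fintype Pt] [∀ p l, Decidable (Inc p l)]
    (hT : IsTriangle Inc A B C lAB lAC lBC) (hlin : IsLinear Inc)
    (hmeet : ∀ l m : Ln, l ≠ m → ∃ p, Inc p l ∧ Inc p m) {m : Ln}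
    (hm : ¬ Inc A m ∧ ¬ Inc B m ∧ ¬ Inc C m) :
    #{z | Inc z m ∧ ¬ Inc z lAB ∧ ¬ Inc z lAC ∧ ¬ Inc z lBC} + 3 = #{z | Inc z m} := by
  classical
  obtain ⟨hAm, hBm, hCm⟩ := hm
  have hmAB : m ≠ lAB := fun h => hAm (h ▸ hT.inc_lAB.1)
  have hmAC : m ≠ lAC := fun h => hAm (h ▸ hT.inc_lAC.1)
  have hmBC : m ≠ lBC := fun h => hBm (h ▸ hT.inc_lBC.1)
  obtain ⟨X, hXm, hX⟩ := hmeet m lAB hmAB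
  obtain ⟨Y, hYm, hY⟩ := hmeet m lAC hmAC
  obtain ⟨Z, hZm, hZ⟩ := hmeet m lBC hmBC
  have hXY : X ≠ Y := by
    rintro rfl
    exact hAm ((hlin.inc_iff_eq hT.lAB_ne_lAC hT.inc_lAB.1 hT.inc_lAC.1 hX).1 hY ▸ hXm)
  have hXZ : X ≠ Z := by
    rintro rfl
    exact hBm ((hlin.inc_iff_eq hT.lAB_ne_lBC hT.inc_lAB.2 hT.inc_lBC.1 hX).1 hZ ▸ hXm)
  have hYZ : Y ≠ Z := by
    rintro rfl
    exact hCm ((hlin.inc_iff_eq hT.lAC_ne_lBC hT.inc_lAC.2 hT.inc_lBC.2 hY).1 hZ ▸ hYm)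
  have hsides : ({z | Inc z m ∧ ¬ Inc z lAB ∧ ¬ Inc z lAC ∧ ¬ Inc z lBC} : Finset Pt) =
      ({z | Inc z m} : Finset Pt) \ {X, Y, Z} := by
    ext z
    simp only [mem_filter, mem_univ, true_and, mem_sdiff, mem_insert, mem_singleton]
    refine and_congr_right fun hzm => ?_
    rw [hlin.inc_iff_eq hmAB hXm hX hzm, hlin.inc_iff_eq hmAC hYm hY hzm,
      hlin.inc_iff_eq hmBC hZm hZ hzm]
    tauto
  rw [hsides, ← card_eq_three.2 ⟨X, Y, Z, hXY, hXZ, hYZ, rfl⟩]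
  refine card_sdiff_add_card_eq_card ?_
  simp only [insert_subset_iff, singleton_subset_iff, mem_filter, mem_univ, true_and]
  exact ⟨hXm, hYm, hZm⟩

theorem exists_residual_line_iff (hT : IsTriangle Inc A B C lAB lAC lBC) (hlin : IsLinear Inc)
    (hjoin : ∀ p q : Pt, p ≠ q → ∃ l, Inc p l ∧ Inc q l) {P z : Pt} {lPA lPB lPC : Ln}
    (hP : ¬ Inc P lAB ∧ ¬ Inc P lAC ∧ ¬ Inc P lBC) (hzP : z ≠ P)
    (hPA : Inc P lPA ∧ Inc A lPA) (hPB : Inc P lPB ∧ Inc B lPB) (hPC : Inc P lPC ∧ Inc C lPC) :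
    (∃ l, (¬ Inc A l ∧ ¬ Inc B l ∧ ¬ Inc C l) ∧ Inc P l ∧ Inc z l) ↔
      ¬ Inc z lPA ∧ ¬ Inc z lPB ∧ ¬ Inc z lPC := by
  have hAP : A ≠ P := fun h => hP.1 (h ▸ hT.inc_lAB.1)
  have hBP : B ≠ P := fun h => hP.1 (h ▸ hT.inc_lAB.2)
  have hCP : C ≠ P := fun h => hP.2.1 (h ▸ hT.inc_lAC.2)
  constructor
  · rintro ⟨l, hl, hPl, hzl⟩
    rwa [← hlin.inc_iff_inc hzP hAP hPl hzl hPA.1 hPA.2,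
      ← hlin.inc_iff_inc hzP hBP hPl hzl hPB.1 hPB.2,
      ← hlin.inc_iff_inc hzP hCP hPl hzl hPC.1 hPC.2]
  · intro hz
    obtain ⟨l, hPl, hzl⟩ := hjoin P z hzP.symm
    refine ⟨l, ?_, hPl, hzl⟩
    rwa [hlin.inc_iff_inc hzP hAP hPl hzl hPA.1 hPA.2,
      hlin.inc_iff_inc hzP hBP hPl hzl hPB.1 hPB.2,
      hlin.inc_iff_inc hzP hCP hPl hzl hPC.1 hPC.2]

end IsTriangle

section Residual

variable [Fintype Pt] [Fintype Ln] [DecidableEq Pt] [∀ p l, Decidable (Inc p l)]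
  {A B C : Pt} {lAB lAC lBC : Ln} {n : ℕ}

theorem residualNeighbors_swap_AB (P : Pt) :
    residualNeighbors Inc B A C lAB lBC lAC P = residualNeighbors Inc A B C lAB lAC lBC P := by
  ext z
  simp only [residualNeighbors, mem_filter, mem_univ, true_and]
  grind

theorem residualNeighbors_swap_AC (P : Pt) :
    residualNeighbors Inc C B A lBC lAC lAB P = residualNeighbors Inc A B C lAB lAC lBC P := by
  ext z
  simp only [residualNeighbors, mem_filter, mem_univ, true_and]
  grind

theorem IsTriangle.card_residualNeighbors (hT : IsTriangle Inc A B C lAB lAC lBC)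
    (hπ : IsProjectivePlane Inc n) {P : Pt} (hP : ¬ Inc P lAB ∧ ¬ Inc P lAC ∧ ¬ Inc P lBC) :
    #(residualNeighbors Inc A B C lAB lAC lBC P) = (n - 2) * (n - 3) := by
  set M : Finset Ln := {l | Inc P l ∧ ¬ Inc A l ∧ ¬ Inc B l ∧ ¬ Inc C l}
  have hM : #M + 3 = n + 1 := by
    rw [← hπ.card_lines P]
    exact hT.dual.card_filter_inc_off_sides_add_three hπ.isLinear.dual hπ.exists_join hP
  have hfiber : ∀ m ∈ M,
      #(({z | Inc z m ∧ ¬ Inc z lAB ∧ ¬ Inc z lAC ∧ ¬ Inc z lBC} : Finset Pt).erase P) =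
        n - 3 := by
    intro m hm
    simp only [M, mem_filter, mem_univ, true_and] at hm
    have h := hT.card_filter_inc_off_sides_add_three hπ.isLinear hπ.exists_meet hm.2
    rw [hπ.card_points m] at h
    rw [card_erase_of_mem (by simp [hm.1, hP])]
    omega
  have hunion : residualNeighbors Inc A B C lAB lAC lBC P = M.biUnion fun m =>
      ({z | Inc z m ∧ ¬ Inc z lAB ∧ ¬ Inc z lAC ∧ ¬ Inc z lBC} : Finset Pt).erase P := by
    ext z
    simp only [residualNeighbors, M, mem_filter, mem_univ, true_and, mem_biUnion, mem_erase]
    grind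
  have hdisj : (M : Set Ln).PairwiseDisjoint fun m =>
      ({z | Inc z m ∧ ¬ Inc z lAB ∧ ¬ Inc z lAC ∧ ¬ Inc z lBC} : Finset Pt).erase P := by
    intro m hm m' hm' hmm'
    simp only [M, coe_filter, Set.mem_ofPred_eq, mem_univ, true_and] at hm hm'
    simp only [Function.onFun, disjoint_left, mem_erase, mem_filter, mem_univ, true_and]
    rintro z ⟨hzP, hzm, -⟩ ⟨-, hzm', -⟩
    exact hzP ((hπ.isLinear hzm hm.1 hzm' hm'.1).resolve_right hmm')
  rw [hunion, card_biUnion hdisj, sum_congr rfl hfiber, sum_const, smul_eq_mul,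
    show #M = n - 2 by omega]

theorem IsTriangle.card_filter_inc_residualNeighbors_erase
    (hT : IsTriangle Inc A B C lAB lAC lBC) (hπ : IsProjectivePlane Inc n) {P Q : Pt}
    (hP : ¬ Inc P lAB ∧ ¬ Inc P lAC ∧ ¬ Inc P lBC)
    (hQ : Q ∈ residualNeighbors Inc A B C lAB lAC lBC P) {q : Ln} (hQq : Inc Q q)
    (hAq : Inc A q) :
    #{z ∈ (residualNeighbors Inc A B C lAB lAC lBC P).erase Q | Inc z q} = n - 4 := by
  have hlin := hπ.isLinear
  simp only [residualNeighbors, mem_filter, mem_univ, true_and] at hQ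
  obtain ⟨hQsides, hQP, hPQ⟩ := hQ
  have hPA : P ≠ A := fun h => hP.1 (h ▸ hT.inc_lAB.1)
  have hPB : P ≠ B := fun h => hP.1 (h ▸ hT.inc_lAB.2)
  have hPC : P ≠ C := fun h => hP.2.1 (h ▸ hT.inc_lAC.2)
  have hQA : Q ≠ A := fun h => hQsides.1 (h ▸ hT.inc_lAB.1)
  obtain ⟨pa, hpa⟩ := hπ.exists_join P A hPA
  obtain ⟨pb, hpb⟩ := hπ.exists_join P B hPB
  obtain ⟨pc, hpc⟩ := hπ.exists_join P C hPC
  obtain ⟨hQpa, hQpb, hQpc⟩ :=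
    (hT.exists_residual_line_iff hlin hπ.exists_join hP hQP hpa hpb hpc).1 hPQ
  have hPq := hlin.not_inc_of_not_inc hPA hpa.1 hpa.2 hQpa hQq hAq
  have hBq := hlin.not_inc_of_not_inc hT.A_ne_B.symm hT.inc_lAB.2 hT.inc_lAB.1 hQsides.1 hQq hAq
  have hCq := hlin.not_inc_of_not_inc hT.A_ne_C.symm hT.inc_lAC.2 hT.inc_lAC.1 hQsides.2.1 hQq hAq
  have hcount := (hT.replace_A hlin hP.2.2 hpb hpc).card_filter_inc_off_sides_add_three hlin
    hπ.exists_meet ⟨hPq, hBq, hCq⟩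
  rw [hπ.card_points q] at hcount
  have hset : {z ∈ (residualNeighbors Inc A B C lAB lAC lBC P).erase Q | Inc z q} =
      ({z | Inc z q ∧ ¬ Inc z pb ∧ ¬ Inc z pc ∧ ¬ Inc z lBC} : Finset Pt) \ {A, Q} := by
    ext z
    simp only [residualNeighbors, mem_filter, mem_erase, mem_univ, true_and, mem_sdiff,
      mem_insert, mem_singleton]
    by_cases hzq : Inc z q
    · have hzP : z ≠ P := fun h => hPq (h ▸ hzq)
      have hqAB : q ≠ lAB := fun h => hQsides.1 (h ▸ hQq)
      have hqAC : q ≠ lAC := fun h => hQsides.2.1 (h ▸ hQq)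
      have hqpa : q ≠ pa := fun h => hPq (h ▸ hpa.1)
      rw [hT.exists_residual_line_iff hlin hπ.exists_join hP hzP hpa hpb hpc,
        hlin.inc_iff_eq hqAB hAq hT.inc_lAB.1 hzq, hlin.inc_iff_eq hqAC hAq hT.inc_lAC.1 hzq,
        hlin.inc_iff_eq hqpa hAq hpa.2 hzq]
      tauto
    · simp [hzq]
  have hsub : {A, Q} ⊆ ({z | Inc z q ∧ ¬ Inc z pb ∧ ¬ Inc z pc ∧ ¬ Inc z lBC} : Finset Pt) := by
    simp only [insert_subset_iff, singleton_subset_iff, mem_filter, mem_univ, true_and]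
    exact ⟨⟨hAq, hlin.not_inc_of_not_inc hT.A_ne_B hT.inc_lAB.1 hT.inc_lAB.2 hP.1 hpb.1 hpb.2,
      hlin.not_inc_of_not_inc hT.A_ne_C hT.inc_lAC.1 hT.inc_lAC.2 hP.2.1 hpc.1 hpc.2,
      hT.not_inc_lBC⟩, hQq, hQpb, hQpc, hQsides.2.2⟩
  rw [hset, card_sdiff_of_subset hsub, card_pair hQA.symm]
  omega

theorem IsTriangle.card_filter_not_collinear_residualNeighbors_erase
    (hT : IsTriangle Inc A B C lAB lAC lBC) (hπ : IsProjectivePlane Inc n) {P Q : Pt}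
    (hP : ¬ Inc P lAB ∧ ¬ Inc P lAC ∧ ¬ Inc P lBC)
    (hQ : Q ∈ residualNeighbors Inc A B C lAB lAC lBC P) :
    #{z ∈ (residualNeighbors Inc A B C lAB lAC lBC P).erase Q |
      ¬ ∃ l, (¬ Inc A l ∧ ¬ Inc B l ∧ ¬ Inc C l) ∧ Inc Q l ∧ Inc z l} = 3 * (n - 4) := by
  have hlin := hπ.isLinear
  have hQsides : ¬ Inc Q lAB ∧ ¬ Inc Q lAC ∧ ¬ Inc Q lBC := by
    simp only [residualNeighbors, mem_filter, mem_univ, true_and] at hQ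
    exact hQ.1
  obtain ⟨qa, hqa⟩ := hπ.exists_join Q A fun h => hQsides.1 (h ▸ hT.inc_lAB.1)
  obtain ⟨qb, hqb⟩ := hπ.exists_join Q B fun h => hQsides.1 (h ▸ hT.inc_lAB.2)
  obtain ⟨qc, hqc⟩ := hπ.exists_join Q C fun h => hQsides.2.1 (h ▸ hT.inc_lAC.2)
  have hA := hT.card_filter_inc_residualNeighbors_erase hπ hP hQ hqa.1 hqa.2
  have hB := hT.swap_AB.card_filter_inc_residualNeighbors_erase hπ ⟨hP.1, hP.2.2, hP.2.1⟩
    (by rwa [residualNeighbors_swap_AB]) hqb.1 hqb.2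
  have hC := hT.swap_AC.card_filter_inc_residualNeighbors_erase hπ ⟨hP.2.2, hP.2.1, hP.1⟩
    (by rwa [residualNeighbors_swap_AC]) hqc.1 hqc.2
  rw [residualNeighbors_swap_AB] at hB
  rw [residualNeighbors_swap_AC] at hC
  have hsplit : {z ∈ (residualNeighbors Inc A B C lAB lAC lBC P).erase Q |
      ¬ ∃ l, (¬ Inc A l ∧ ¬ Inc B l ∧ ¬ Inc C l) ∧ Inc Q l ∧ Inc z l} =
      {z ∈ (residualNeighbors Inc A B C lAB lAC lBC P).erase Q | Inc z qa ∨ Inc z qb ∨ Inc z qc}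
      := by
    refine filter_congr fun z hz => ?_
    rw [hT.exists_residual_line_iff hlin hπ.exists_join hQsides (ne_of_mem_erase hz) hqa hqb hqc]
    tauto
  have hqab : qa ≠ qb := fun h => hlin.not_inc_of_not_inc hT.A_ne_B.symm hT.inc_lAB.2
    hT.inc_lAB.1 hQsides.1 hqa.1 hqa.2 (h ▸ hqb.2)
  have hqac : qa ≠ qc := fun h => hlin.not_inc_of_not_inc hT.A_ne_C.symm hT.inc_lAC.2
    hT.inc_lAC.1 hQsides.2.1 hqa.1 hqa.2 (h ▸ hqc.2)
  have hqbc : qb ≠ qc := fun h => hlin.not_inc_of_not_inc hT.B_ne_C.symm hT.inc_lBC.2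
    hT.inc_lBC.1 hQsides.2.2 hqb.1 hqb.2 (h ▸ hqc.2)
  have hdisj := hlin.disjoint_filter_inc_erase (residualNeighbors Inc A B C lAB lAC lBC P)
  rw [hsplit, filter_or, filter_or, card_union_of_disjoint
      (disjoint_union_right.2 ⟨hdisj hqa.1 hqb.1 hqab, hdisj hqa.1 hqc.1 hqac⟩),
    card_union_of_disjoint (hdisj hqb.1 hqc.1 hqbc), hA, hB, hC]
  ring

end Residual

end

theorem stmt_9_general {Pt Ln : Type*} [Fintype Pt] [Fintype Ln] [DecidableEq Pt] (Inc : Pt → Ln → Prop)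
    [∀ p l, Decidable (Inc p l)] (n : ℕ)
    (hjoin : ∀ p q : Pt, p ≠ q → ∃! l : Ln, Inc p l ∧ Inc q l)
    (hmeet : ∀ l m : Ln, l ≠ m → ∃! p : Pt, Inc p l ∧ Inc p m)
    (hldeg : ∀ l : Ln, (Finset.univ.filter (fun p : Pt => Inc p l)).card = n + 1)
    (hpdeg : ∀ p : Pt, (Finset.univ.filter (fun l : Ln => Inc p l)).card = n + 1)
    (A B C : Pt) (lAB lAC lBC : Ln)
    (hAB : Inc A lAB ∧ Inc B lAB) (hAC : Inc A lAC ∧ Inc C lAC)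
    (hBC : Inc B lBC ∧ Inc C lBC)
    (hnc : ¬ ∃ l : Ln, Inc A l ∧ Inc B l ∧ Inc C l)
    (P Q : Pt) (hPQ : P ≠ Q)
    (hP : ¬ Inc P lAB ∧ ¬ Inc P lAC ∧ ¬ Inc P lBC)
    (hQ : ¬ Inc Q lAB ∧ ¬ Inc Q lAC ∧ ¬ Inc Q lBC)
    (hcoll : ∃ l : Ln, (¬ Inc A l ∧ ¬ Inc B l ∧ ¬ Inc C l) ∧ Inc P l ∧ Inc Q l) :
    (Finset.univ.filter (fun z : Pt =>
        (¬ Inc z lAB ∧ ¬ Inc z lAC ∧ ¬ Inc z lBC) ∧ z ≠ P ∧ z ≠ Q ∧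
        (∃ l : Ln, (¬ Inc A l ∧ ¬ Inc B l ∧ ¬ Inc C l) ∧ Inc P l ∧ Inc z l) ∧
        (∃ l : Ln, (¬ Inc A l ∧ ¬ Inc B l ∧ ¬ Inc C l) ∧ Inc Q l ∧ Inc z l))).card
      = (n - 4) ^ 2 + 1 := by
  have hπ : IsProjectivePlane Inc n := ⟨.of_existsUnique hjoin, fun p q h => (hjoin p q h).exists,
    fun l m h => (hmeet l m h).exists, hldeg, hpdeg⟩
  have hT : IsTriangle Inc A B C lAB lAC lBC := ⟨hAB, hAC, hBC,
    fun h => hnc ⟨lAB, hAB.1, hAB.2, h⟩, fun h => hnc ⟨lAC, hAC.1, h, hAC.2⟩,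
    fun h => hnc ⟨lBC, h, hBC.1, hBC.2⟩⟩
  set N := residualNeighbors Inc A B C lAB lAC lBC P
  have hQN : Q ∈ N := by
    simp only [N, residualNeighbors, mem_filter, mem_univ, true_and]
    exact ⟨hQ, hPQ.symm, hcoll⟩
  have hcommon : (Finset.univ.filter (fun z : Pt =>
        (¬ Inc z lAB ∧ ¬ Inc z lAC ∧ ¬ Inc z lBC) ∧ z ≠ P ∧ z ≠ Q ∧
        (∃ l : Ln, (¬ Inc A l ∧ ¬ Inc B l ∧ ¬ Inc C l) ∧ Inc P l ∧ Inc z l) ∧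
        (∃ l : Ln, (¬ Inc A l ∧ ¬ Inc B l ∧ ¬ Inc C l) ∧ Inc Q l ∧ Inc z l))) =
      {z ∈ N.erase Q | ∃ l, (¬ Inc A l ∧ ¬ Inc B l ∧ ¬ Inc C l) ∧ Inc Q l ∧ Inc z l} := by
    ext z
    simp only [N, residualNeighbors, mem_filter, mem_erase, mem_univ, true_and]
    grind
  have hsplit := card_filter_add_card_filter_not (s := N.erase Q)
    fun z => ∃ l, (¬ Inc A l ∧ ¬ Inc B l ∧ ¬ Inc C l) ∧ Inc Q l ∧ Inc z l
  have hN := card_erase_add_one hQN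
  rw [← hcommon, hT.card_filter_not_collinear_residualNeighbors_erase hπ hP hQN] at hsplit
  rw [hT.card_residualNeighbors hπ hP, ← hsplit] at hN
  by_cases hn : n < 4
  · interval_cases n <;> omega
  obtain ⟨j, rfl⟩ := Nat.exists_eq_add_of_le' (not_lt.1 hn)
  rw [show j + 4 - 2 = j + 2 by omega, show j + 4 - 3 = j + 1 by omega,
    Nat.add_sub_cancel] at hN
  rw [Nat.add_sub_cancel]
  nlinarith

/-- In the structure obtained from a projective plane of order `n ≥ 5` by deleting the
points of a triangle's sides and the lines through its vertices, any two remaining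
collinear points have exactly `(n-4)² + 1` remaining points collinear with both. -/
theorem stmt_9 {Pt Ln : Type*} [Fintype Pt] [Fintype Ln] [DecidableEq Pt] (Inc : Pt → Ln → Prop)
    [∀ p l, Decidable (Inc p l)] (n : ℕ) (hn : 5 ≤ n)
    (hjoin : ∀ p q : Pt, p ≠ q → ∃! l : Ln, Inc p l ∧ Inc q l)
    (hmeet : ∀ l m : Ln, l ≠ m → ∃! p : Pt, Inc p l ∧ Inc p m)
    (hldeg : ∀ l : Ln, (Finset.univ.filter (fun p : Pt => Inc p l)).card = n + 1)
    (hpdeg : ∀ p : Pt, (Finset.univ.filter (fun l : Ln => Inc p l)).card = n + 1)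
    (hcardP : Fintype.card Pt = n ^ 2 + n + 1)
    (hcardL : Fintype.card Ln = n ^ 2 + n + 1)
    (A B C : Pt) (lAB lAC lBC : Ln)
    (hAB : Inc A lAB ∧ Inc B lAB) (hAC : Inc A lAC ∧ Inc C lAC)
    (hBC : Inc B lBC ∧ Inc C lBC)
    (hnc : ¬ ∃ l : Ln, Inc A l ∧ Inc B l ∧ Inc C l)
    (P Q : Pt) (hPQ : P ≠ Q)
    (hP : ¬ Inc P lAB ∧ ¬ Inc P lAC ∧ ¬ Inc P lBC)
    (hQ : ¬ Inc Q lAB ∧ ¬ Inc Q lAC ∧ ¬ Inc Q lBC)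
    (hcoll : ∃ l : Ln, (¬ Inc A l ∧ ¬ Inc B l ∧ ¬ Inc C l) ∧ Inc P l ∧ Inc Q l) :
    (Finset.univ.filter (fun z : Pt =>
        (¬ Inc z lAB ∧ ¬ Inc z lAC ∧ ¬ Inc z lBC) ∧ z ≠ P ∧ z ≠ Q ∧
        (∃ l : Ln, (¬ Inc A l ∧ ¬ Inc B l ∧ ¬ Inc C l) ∧ Inc P l ∧ Inc z l) ∧
        (∃ l : Ln, (¬ Inc A l ∧ ¬ Inc B l ∧ ¬ Inc C l) ∧ Inc Q l ∧ Inc z l))).card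
      = (n - 4) ^ 2 + 1 :=
  stmt_9_general Inc n hjoin hmeet hldeg hpdeg A B C lAB lAC lBC hAB hAC hBC hnc P Q hPQ hP hQ hcoll
end

section
/- Let G be a finite group of order v and D ⊆ G a subset of size k such that all nontrivial left quotients d₁⁻¹d₂ (d₁ ≠ d₂ in D) are distinct (a deficient difference set). Then the incidence structure with point set G and lines {gD : g ∈ G} is a partial linear space in which every point lies on exactly k lines and every line has exactly k points. -/
/-- The development of a deficient difference set `D` of size `k` in a finite group `G`
is a partial linear space in which every point lies on exactly `k` lines and every line
has exactly `k` points. -/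
theorem stmt_11 {G : Type*} [Group G] [Fintype G] [DecidableEq G]
    (v k : ℕ) (hv : Fintype.card G = v) (D : Finset G) (hk : D.card = k)
    (hdds : ∀ d₁ ∈ D, ∀ d₂ ∈ D, ∀ e₁ ∈ D, ∀ e₂ ∈ D,
      d₁ ≠ d₂ → e₁ ≠ e₂ → d₁⁻¹ * d₂ = e₁⁻¹ * e₂ → d₁ = e₁ ∧ d₂ = e₂) :
    (∀ x y : G, x ≠ y →
      (((Finset.univ.image fun g : G => D.image fun d => g * d).filter
        (fun S => x ∈ S ∧ y ∈ S)).card ≤ 1)) ∧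
    (∀ x : G,
      ((Finset.univ.image fun g : G => D.image fun d => g * d).filter
        (fun S => x ∈ S)).card = k) ∧
    (∀ S ∈ (Finset.univ.image fun g : G => D.image fun d => g * d), S.card = k) := by
  subst hk
  have cardline : ∀ g : G, (D.image fun d => g * d).card = D.card := by
    intro g
    exact Finset.card_image_of_injective _ (mul_right_injective g)
  refine ⟨?_, ?_, ?_⟩
  · -- partial linear space
    intro x y hxy
    rw [Finset.card_le_one]
    intro S hS T hT
    simp only [Finset.mem_filter, Finset.mem_image, Finset.mem_univ, true_and] at hS hT
    obtain ⟨⟨g, rfl⟩, hxS, hyS⟩ := hS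
    obtain ⟨⟨h, rfl⟩, hxT, hyT⟩ := hT
    simp only [Finset.mem_image] at hxS hyS hxT hyT
    obtain ⟨d₁, hd₁, hx1⟩ := hxS
    obtain ⟨d₂, hd₂, hy1⟩ := hyS
    obtain ⟨e₁, he₁, hx2⟩ := hxT
    obtain ⟨e₂, he₂, hy2⟩ := hyT
    have hd : d₁ ≠ d₂ := by
      rintro rfl; exact hxy (hx1.symm.trans hy1)
    have he : e₁ ≠ e₂ := by
      rintro rfl; exact hxy (hx2.symm.trans hy2)
    have hq : d₁⁻¹ * d₂ = e₁⁻¹ * e₂ := by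
      have h1 : x⁻¹ * y = d₁⁻¹ * d₂ := by rw [← hx1, ← hy1]; group
      have h2 : x⁻¹ * y = e₁⁻¹ * e₂ := by rw [← hx2, ← hy2]; group
      rw [← h1, ← h2]
    obtain ⟨hde, -⟩ := hdds d₁ hd₁ d₂ hd₂ e₁ he₁ e₂ he₂ hd he hq
    have hg : g = h := by
      have hgh : g * d₁ = h * d₁ := by rw [hx1, ← hx2, hde]
      exact mul_right_cancel hgh
    rw [hg]
  · -- k lines through each point
    intro x
    by_cases hDe : D = ∅
    · subst hDe
      rw [Finset.card_empty, Finset.card_eq_zero, Finset.filter_eq_empty_iff]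
      intro S hS
      simp only [Finset.mem_image, Finset.mem_univ, true_and] at hS
      obtain ⟨g, rfl⟩ := hS
      simp
    · obtain ⟨d₀, hd₀⟩ := Finset.nonempty_of_ne_empty hDe
      -- injectivity of g ↦ gD
      have inj : ∀ g h : G, (D.image fun d => g * d) = (D.image fun d => h * d) → g = h := by
        intro g h hgh
        have hmem : g * d₀ ∈ D.image fun d => h * d := by
          rw [← hgh]; exact Finset.mem_image_of_mem _ hd₀
        simp only [Finset.mem_image] at hmem
        obtain ⟨e, he, heq⟩ := hmem
        have hed : e = d₀ := by
          by_cases hpair : ∃ d' ∈ D, d' ≠ d₀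
          · obtain ⟨d', hd', hne⟩ := hpair
            have hmem' : g * d' ∈ D.image fun d => h * d := by
              rw [← hgh]; exact Finset.mem_image_of_mem _ hd'
            simp only [Finset.mem_image] at hmem'
            obtain ⟨e', he', heq'⟩ := hmem'
            have hee : e ≠ e' := by
              rintro rfl
              exact hne (mul_left_cancel (heq.symm.trans heq')).symm
            have hq : d₀⁻¹ * d' = e⁻¹ * e' := by
              have h1 : (g * d₀)⁻¹ * (g * d') = d₀⁻¹ * d' := by group
              have h2 : (h * e)⁻¹ * (h * e') = e⁻¹ * e' := by group
              rw [← h1, ← h2, heq, heq']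
            exact ((hdds d₀ hd₀ d' hd' e he e' he' (Ne.symm hne) hee hq).1).symm
          · push_neg at hpair
            exact hpair e he
        subst hed
        exact mul_right_cancel heq.symm
      have hfilter : ((Finset.univ.image fun g : G => D.image fun d => g * d).filter
          (fun S => x ∈ S)) = D.image fun d => D.image fun e => x * d⁻¹ * e := by
        ext S
        simp only [Finset.mem_filter, Finset.mem_image, Finset.mem_univ, true_and]
        constructor
        · rintro ⟨⟨g, rfl⟩, hx⟩
          simp only [Finset.mem_image] at hx
          obtain ⟨d, hd, hgd⟩ := hx
          refine ⟨d, hd, ?_⟩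
          have : x * d⁻¹ = g := by rw [← hgd]; group
          rw [this]
        · rintro ⟨d, hd, rfl⟩
          refine ⟨⟨x * d⁻¹, rfl⟩, ?_⟩
          simp only [Finset.mem_image]
          exact ⟨d, hd, by group⟩
      rw [hfilter]
      apply Finset.card_image_of_injOn
      intro d hd d' hd' heq
      have := inj (x * d⁻¹) (x * d'⁻¹) heq
      have h2 : d⁻¹ = d'⁻¹ := mul_left_cancel this
      exact inv_injective h2
  · -- each line has k points
    intro S hS
    simp only [Finset.mem_image, Finset.mem_univ, true_and] at hS
    obtain ⟨g, rfl⟩ := hS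
    exact cardline g
end

section
/- For n ≥ 2 and k ≥ 3 with 2(n-1) = k(k-1), there is no family C of n² cliques of size k in the n×n rook graph such that any two distinct cliques in C share at most one vertex. -/
/-!
A clique with two vertices fixes a row or a column, and then every further vertex lies in it, so
each of the `n²` cliques sits inside one of the `2n` lines of the board. Within a line, cliques
meeting pairwise in at most one point cover disjoint sets of ordered pairs, so a line carries at
most `n(n-1) / (k(k-1)) = n/2` of them. The total forces equality on every line, hence the cliques
in a line form a Steiner system `S(2, k, n)`. In such a system the blocks through a point `p`
partition the other `n - 1` points, so there are `(n-1)/(k-1)` of them, while the `k` points of a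
block missing `p` lie on distinct blocks through `p`; thus `k(k-1) ≤ n - 1 = k(k-1)/2`, which is absurd.
-/

open Finset

section Packing

variable {α : Type*} [DecidableEq α]

/-- A partial Steiner system `S(2, k, #L)` on `L`. -/
structure IsPairPacking (L : Finset α) (k : ℕ) (F : Finset (Finset α)) : Prop where
  subset : ∀ K ∈ F, K ⊆ L
  card_eq : ∀ K ∈ F, K.card = k
  inter_card_le : (F : Set (Finset α)).Pairwise fun K₁ K₂ => (K₁ ∩ K₂).card ≤ 1

namespace IsPairPacking

variable {L : Finset α} {k : ℕ} {F : Finset (Finset α)}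

theorem eq_of_mem_of_mem (hF : IsPairPacking L k F) {K₁ K₂ : Finset α} (h₁ : K₁ ∈ F)
    (h₂ : K₂ ∈ F) {a b : α} (hab : a ≠ b) (ha₁ : a ∈ K₁) (ha₂ : a ∈ K₂) (hb₁ : b ∈ K₁)
    (hb₂ : b ∈ K₂) : K₁ = K₂ := by
  by_contra hne
  have hle := hF.inter_card_le h₁ h₂ hne
  have hlt : 1 < (K₁ ∩ K₂).card :=
    one_lt_card.2 ⟨a, mem_inter.2 ⟨ha₁, ha₂⟩, b, mem_inter.2 ⟨hb₁, hb₂⟩, hab⟩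
  omega

theorem pairwiseDisjoint_offDiag (hF : IsPairPacking L k F) :
    (F : Set (Finset α)).PairwiseDisjoint offDiag := by
  intro K₁ h₁ K₂ h₂ hne
  refine disjoint_left.2 fun ⟨a, b⟩ hab₁ hab₂ => ?_
  rw [mem_offDiag] at hab₁ hab₂
  exact hne (hF.eq_of_mem_of_mem h₁ h₂ hab₁.2.2 hab₁.1 hab₂.1 hab₁.2.1 hab₂.2.1)

theorem card_biUnion_offDiag (hF : IsPairPacking L k F) :
    (F.biUnion offDiag).card = F.card * (k * (k - 1)) := by
  rw [card_biUnion hF.pairwiseDisjoint_offDiag, sum_const_nat fun K hK => ?_]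
  rw [offDiag_card, hF.card_eq K hK, Nat.mul_sub_one]

theorem biUnion_offDiag_subset (hF : IsPairPacking L k F) : F.biUnion offDiag ⊆ L.offDiag :=
  biUnion_subset.2 fun K hK => offDiag_mono (hF.subset K hK)

theorem card_mul_le (hF : IsPairPacking L k F) :
    F.card * (k * (k - 1)) ≤ L.card * (L.card - 1) := by
  rw [← hF.card_biUnion_offDiag, Nat.mul_sub_one, ← offDiag_card]
  exact card_le_card hF.biUnion_offDiag_subset

theorem exists_mem_of_card_mul_eq (hF : IsPairPacking L k F)
    (heq : F.card * (k * (k - 1)) = L.card * (L.card - 1)) {a b : α} (ha : a ∈ L) (hb : b ∈ L)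
    (hab : a ≠ b) : ∃ K ∈ F, a ∈ K ∧ b ∈ K := by
  have hcover : F.biUnion offDiag = L.offDiag := by
    refine eq_of_subset_of_card_le hF.biUnion_offDiag_subset ?_
    rw [hF.card_biUnion_offDiag, heq, offDiag_card, Nat.mul_sub_one]
  have hmem : (a, b) ∈ F.biUnion offDiag := hcover ▸ mem_offDiag.2 ⟨ha, hb, hab⟩
  obtain ⟨K, hK, habK⟩ := mem_biUnion.1 hmem
  exact ⟨K, hK, (mem_offDiag.1 habK).1, (mem_offDiag.1 habK).2.1⟩

/-- The blocks through `p` cover disjoint sets of points other than `p`. -/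
theorem card_filter_mem_mul_le (hF : IsPairPacking L k F) {p : α} (hp : p ∈ L) :
    (F.filter (p ∈ ·)).card * (k - 1) ≤ L.card - 1 := by
  have hdisj : ((F.filter (p ∈ ·)) : Set (Finset α)).PairwiseDisjoint (·.erase p) := by
    intro K₁ h₁ K₂ h₂ hne
    rw [mem_coe, mem_filter] at h₁ h₂
    refine disjoint_left.2 fun q hq₁ hq₂ => ?_
    rw [mem_erase] at hq₁ hq₂
    exact hne (hF.eq_of_mem_of_mem h₁.1 h₂.1 hq₁.1 hq₁.2 hq₂.2 h₁.2 h₂.2)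
  calc (F.filter (p ∈ ·)).card * (k - 1)
      = ((F.filter (p ∈ ·)).biUnion (·.erase p)).card := by
        rw [card_biUnion hdisj, sum_const_nat fun K hK => ?_]
        obtain ⟨hKF, hpK⟩ := mem_filter.1 hK
        rw [card_erase_of_mem hpK, hF.card_eq K hKF]
    _ ≤ (L.erase p).card :=
        card_le_card <| biUnion_subset.2 fun K hK =>
          erase_subset_erase p (hF.subset K (mem_filter.1 hK).1)
    _ = L.card - 1 := card_erase_of_mem hp

/-- A block `B` missing `p` meets each block through `p` at most once, and when all pairs are
covered each of its points lies on one of them. -/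
theorem card_le_card_filter_mem (hF : IsPairPacking L k F)
    (hcover : ∀ a ∈ L, ∀ b ∈ L, a ≠ b → ∃ K ∈ F, a ∈ K ∧ b ∈ K) {p : α} (hp : p ∈ L)
    {B : Finset α} (hB : B ∈ F) (hpB : p ∉ B) : k ≤ (F.filter (p ∈ ·)).card := by
  have hsub : B ⊆ (F.filter (p ∈ ·)).biUnion (· ∩ B) := by
    intro q hq
    obtain ⟨K, hK, hpK, hqK⟩ :=
      hcover p hp q (hF.subset B hB hq) fun hpq => hpB (hpq ▸ hq)
    exact mem_biUnion.2 ⟨K, mem_filter.2 ⟨hK, hpK⟩, mem_inter.2 ⟨hqK, hq⟩⟩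
  calc k = B.card := (hF.card_eq B hB).symm
    _ ≤ ((F.filter (p ∈ ·)).biUnion (· ∩ B)).card := card_le_card hsub
    _ ≤ ∑ K ∈ F.filter (p ∈ ·), (K ∩ B).card := card_biUnion_le
    _ ≤ ∑ _K ∈ F.filter (p ∈ ·), 1 := sum_le_sum fun K hK => by
        obtain ⟨hKF, hpK⟩ := mem_filter.1 hK
        exact hF.inter_card_le hKF hB fun hKB => hpB (hKB ▸ hpK)
    _ = (F.filter (p ∈ ·)).card := by rw [sum_const, smul_eq_mul, mul_one]

/-- A Fisher-type inequality for Steiner systems `S(2, k, v)` with `k < v`. -/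
theorem mul_pred_le_card_pred (hF : IsPairPacking L k F)
    (heq : F.card * (k * (k - 1)) = L.card * (L.card - 1)) (hk : k < L.card) :
    k * (k - 1) ≤ L.card - 1 := by
  rcases F.eq_empty_or_nonempty with rfl | ⟨B, hB⟩
  · simp only [card_empty, zero_mul] at heq
    obtain rfl : k = 0 := by rcases Nat.mul_eq_zero.1 heq.symm with h | h <;> omega
    simp
  obtain ⟨p, hpL, hpB⟩ :=
    exists_of_ssubset (ssubset_of_subset_of_ne (hF.subset B hB) fun hBL => by
      have := hF.card_eq B hB
      rw [hBL] at this
      omega)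
  calc k * (k - 1) ≤ (F.filter (p ∈ ·)).card * (k - 1) := Nat.mul_le_mul_right _ <|
        hF.card_le_card_filter_mem (fun _ ha _ hb hab => hF.exists_mem_of_card_mul_eq heq ha hb hab)
          hpL hB hpB
    _ ≤ L.card - 1 := hF.card_filter_mem_mul_le hpL

end IsPairPacking

end Packing

section Rook

def rookLine (n : ℕ) : Fin n ⊕ Fin n → Finset (Fin n × Fin n)
  | .inl i => {i} ×ˢ univ
  | .inr j => univ ×ˢ {j}

theorem card_rookLine (n : ℕ) (l : Fin n ⊕ Fin n) : (rookLine n l).card = n := by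
  cases l <;> simp [rookLine]

variable {α β : Type*} {K : Finset (α × β)}

theorem fst_eq_of_isRookClique (hK : ∀ a ∈ K, ∀ b ∈ K, a ≠ b → a.1 = b.1 ∨ a.2 = b.2)
    {a b : α × β} (ha : a ∈ K) (hb : b ∈ K) (hab : a ≠ b) (h₁ : a.1 = b.1) {p : α × β}
    (hp : p ∈ K) : p.1 = a.1 := by
  by_contra hpa
  have hpa₂ := (hK p hp a ha (by rintro rfl; exact hpa rfl)).resolve_left hpa
  have hpb₂ := (hK p hp b hb (by rintro rfl; exact hpa h₁.symm)).resolve_left (h₁ ▸ hpa)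
  exact hab (Prod.ext h₁ (hpa₂.symm.trans hpb₂))

theorem snd_eq_of_isRookClique (hK : ∀ a ∈ K, ∀ b ∈ K, a ≠ b → a.1 = b.1 ∨ a.2 = b.2)
    {a b : α × β} (ha : a ∈ K) (hb : b ∈ K) (hab : a ≠ b) (h₂ : a.2 = b.2) {p : α × β}
    (hp : p ∈ K) : p.2 = a.2 := by
  by_contra hpa
  have hpa₁ := (hK p hp a ha (by rintro rfl; exact hpa rfl)).resolve_right hpa
  have hpb₁ := (hK p hp b hb (by rintro rfl; exact hpa h₂.symm)).resolve_right (h₂ ▸ hpa)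
  exact hab (Prod.ext (hpa₁.symm.trans hpb₁) h₂)

theorem exists_subset_rookLine {n : ℕ} {K : Finset (Fin n × Fin n)} (hcard : 2 ≤ K.card)
    (hK : ∀ a ∈ K, ∀ b ∈ K, a ≠ b → a.1 = b.1 ∨ a.2 = b.2) : ∃ l, K ⊆ rookLine n l := by
  obtain ⟨a, ha, b, hb, hab⟩ := one_lt_card.1 hcard
  rcases hK a ha b hb hab with h₁ | h₂
  · exact ⟨.inl a.1, fun p hp => by
      simp [rookLine, Prod.ext_iff, fst_eq_of_isRookClique hK ha hb hab h₁ hp]⟩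
  · exact ⟨.inr a.2, fun p hp => by
      simp [rookLine, Prod.ext_iff, snd_eq_of_isRookClique hK ha hb hab h₂ hp]⟩

end Rook

theorem stmt_16_general (n k : ℕ) (hk : 3 ≤ k) (h : 2 * (n - 1) = k * (k - 1)) :
    ¬ ∃ C : Finset (Finset (Fin n × Fin n)),
        C.card = n ^ 2 ∧
        (∀ K ∈ C, K.card = k ∧ ∀ a ∈ K, ∀ b ∈ K, a ≠ b → a.1 = b.1 ∨ a.2 = b.2) ∧
        (∀ K₁ ∈ C, ∀ K₂ ∈ C, K₁ ≠ K₂ → (K₁ ∩ K₂).card ≤ 1) := by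
  rintro ⟨C, hCcard, hclique, hinter⟩
  have hkn : k < n := by
    have : 2 * k ≤ k * (k - 1) := by rw [mul_comm]; exact Nat.mul_le_mul_left k (by omega)
    omega
  have : Nonempty (Fin n) := ⟨⟨0, by omega⟩⟩
  choose! line hline using fun K hK =>
    exists_subset_rookLine (by rw [(hclique K hK).1]; omega) (hclique K hK).2
  set F := fun l => C.filter (line · = l)
  have hF : ∀ l, IsPairPacking (rookLine n l) k (F l) := fun l =>
    { subset := fun K hK => (mem_filter.1 hK).2 ▸ hline K (mem_filter.1 hK).1
      card_eq := fun K hK => (hclique K (mem_filter.1 hK).1).1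
      inter_card_le := fun K₁ h₁ K₂ h₂ => hinter K₁ (mem_filter.1 h₁).1 K₂ (mem_filter.1 h₂).1 }
  have hle : ∀ l, 2 * (F l).card ≤ n := fun l => by
    have := (hF l).card_mul_le
    rw [card_rookLine, ← h, ← mul_assoc, mul_comm _ 2] at this
    exact Nat.le_of_mul_le_mul_right this (by omega)
  have hsum : ∑ l, 2 * (F l).card = ∑ _l : Fin n ⊕ Fin n, n := by
    rw [← mul_sum, ← card_eq_sum_card_fiberwise fun K _ => mem_univ (line K), hCcard,
      sum_const, card_univ, Fintype.card_sum, Fintype.card_fin, smul_eq_mul]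
    ring
  let l₀ : Fin n ⊕ Fin n := .inl ⟨0, by omega⟩
  have heq : 2 * (F l₀).card = n := (sum_eq_sum_iff_of_le fun l _ => hle l).1 hsum l₀ (mem_univ _)
  have hfisher := (hF l₀).mul_pred_le_card_pred
    (by rw [card_rookLine, ← h, ← mul_assoc, mul_comm _ 2, heq]) (by rw [card_rookLine]; exact hkn)
  rw [card_rookLine] at hfisher
  have : 0 < k * (k - 1) := Nat.mul_pos (by omega) (by omega)
  omega

/-- For `n ≥ 2`, `k ≥ 3` with `2(n-1) = k(k-1)`, there is no family of `n²` many
`k`-cliques in the `n × n` rook graph pairwise sharing at most one vertex. -/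
theorem stmt_16 (n k : ℕ) (hn : 2 ≤ n) (hk : 3 ≤ k) (h : 2 * (n - 1) = k * (k - 1)) :
    ¬ ∃ C : Finset (Finset (Fin n × Fin n)),
        C.card = n ^ 2 ∧
        (∀ K ∈ C, K.card = k ∧ ∀ a ∈ K, ∀ b ∈ K, a ≠ b → a.1 = b.1 ∨ a.2 = b.2) ∧
        (∀ K₁ ∈ C, ∀ K₂ ∈ C, K₁ ≠ K₂ → (K₁ ∩ K₂).card ≤ 1) :=
  stmt_16_general n k hk h
end

section
/- If a Steiner system S(2, k, n) exists (a collection of k-subsets of an n-set such that every pair of points lies in exactly one block) with 2 ≤ k < n, then n - 1 ≥ k(k - 1). -/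
/-- If a Steiner system `S(2, k, n)` exists with `2 ≤ k < n`, then `n - 1 ≥ k(k-1)`. -/
theorem stmt_17 {α : Type*} [Fintype α] [DecidableEq α] (n k : ℕ)
    (hcard : Fintype.card α = n) (hk2 : 2 ≤ k) (hkn : k < n)
    (B : Finset (Finset α)) (hblock : ∀ b ∈ B, b.card = k)
    (hsteiner : ∀ p q : α, p ≠ q → ∃! b, b ∈ B ∧ p ∈ b ∧ q ∈ b) :
    k * (k - 1) ≤ n - 1 := by
  classical
  have hn1 : 1 < Fintype.card α := by omega
  obtain ⟨p, q, hpq⟩ := Fintype.exists_pair_of_one_lt_card hn1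
  obtain ⟨b0, ⟨hb0B, hp0, hq0⟩, -⟩ := hsteiner p q hpq
  have hb0card : b0.card = k := hblock b0 hb0B
  obtain ⟨x, hx⟩ : ∃ x, x ∉ b0 := by
    by_contra h
    push_neg at h
    have : Fintype.card α ≤ b0.card := by
      rw [← Finset.card_univ]
      exact Finset.card_le_card fun a _ => h a
    omega
  set Bx := B.filter (fun b => x ∈ b) with hBx
  have hmemBx : ∀ b ∈ Bx, b ∈ B ∧ x ∈ b := fun b hb => Finset.mem_filter.mp hb
  have hdisj : ∀ b1 ∈ Bx, ∀ b2 ∈ Bx, b1 ≠ b2 →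
      Disjoint (b1.erase x) (b2.erase x) := by
    intro b1 hb1 b2 hb2 hne
    obtain ⟨hb1B, hxb1⟩ := hmemBx b1 hb1
    obtain ⟨hb2B, hxb2⟩ := hmemBx b2 hb2
    refine Finset.disjoint_left.mpr fun y hy1 hy2 => hne ?_
    have hyx : y ≠ x := Finset.ne_of_mem_erase hy1
    obtain ⟨b, -, huniq⟩ := hsteiner x y hyx.symm
    have e1 := huniq b1 ⟨hb1B, hxb1, Finset.mem_of_mem_erase hy1⟩
    have e2 := huniq b2 ⟨hb2B, hxb2, Finset.mem_of_mem_erase hy2⟩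
    rw [e1, e2]
  have hunion : Bx.biUnion (fun b => b.erase x) = Finset.univ.erase x := by
    ext y
    simp only [Finset.mem_biUnion, Finset.mem_erase, Finset.mem_univ, and_true]
    constructor
    · rintro ⟨b, hb, hy⟩
      exact hy.1
    · intro hyx
      obtain ⟨b, ⟨hbB, hxb, hyb⟩, -⟩ := hsteiner x y (Ne.symm hyx)
      exact ⟨b, Finset.mem_filter.mpr ⟨hbB, hxb⟩, hyx, hyb⟩
  have hcount : Bx.card * (k - 1) = n - 1 := by
    have h1 : (Finset.univ.erase x).card = n - 1 := by
      rw [Finset.card_erase_of_mem (Finset.mem_univ x), Finset.card_univ, hcard]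
    rw [← h1, ← hunion, Finset.card_biUnion hdisj]
    rw [Finset.sum_congr rfl (fun b hb => ?_), Finset.sum_const, smul_eq_mul]
    obtain ⟨hbB, hxb⟩ := hmemBx b hb
    rw [Finset.card_erase_of_mem hxb, hblock b hbB]
  have hle : k ≤ Bx.card := by
    have : b0.card ≤ Bx.card := by
      apply Finset.card_le_card_of_injOn
        (fun y => if h : x ≠ y then (hsteiner x y h).choose else ∅)
      · intro y hy
        have hxy : x ≠ y := fun h => hx (h ▸ hy)
        simp only [dif_pos hxy]
        obtain ⟨⟨hbB, hxb, -⟩, -⟩ := (hsteiner x y hxy).choose_spec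
        exact Finset.mem_filter.mpr ⟨hbB, hxb⟩
      · intro y1 hy1 y2 hy2 heq
        have hxy1 : x ≠ y1 := fun h => hx (h ▸ hy1)
        have hxy2 : x ≠ y2 := fun h => hx (h ▸ hy2)
        simp only [dif_pos hxy1, dif_pos hxy2] at heq
        by_contra hne
        obtain ⟨⟨h1B, h1x, h1y⟩, -⟩ := (hsteiner x y1 hxy1).choose_spec
        obtain ⟨⟨h2B, h2x, h2y⟩, -⟩ := (hsteiner x y2 hxy2).choose_spec
        obtain ⟨b, -, huniq⟩ := hsteiner y1 y2 hne
        have e1 := huniq (hsteiner x y1 hxy1).choose ⟨h1B, h1y, heq ▸ h2y⟩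
        have e2 := huniq b0 ⟨hb0B, hy1, hy2⟩
        exact hx (e2 ▸ e1 ▸ h1x)
    omega
  calc k * (k - 1) ≤ Bx.card * (k - 1) := Nat.mul_le_mul_right _ hle
    _ = n - 1 := hcount
end

section
/- If a strongly regular (v_k; λ, μ) configuration whose point graph is primitive (0 < μ < k(k-1)) satisfies (v - k)(λ + 1) = k(k-1)³, then for every non-incident point-line pair (P, ℓ), the number of lines through P meeting ℓ equals k(k-1)²/(v - k). -/
/-- In a primitive strongly regular `(v_k; λ, μ)` configuration satisfying
`(v - k)(λ + 1) = k(k-1)³`, every non-incident point-line pair `(P, ℓ)` has exactly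
`k(k-1)²/(v-k)` lines through `P` meeting `ℓ`. -/
theorem stmt_19 {Pt Ln : Type*} [Fintype Pt] [Fintype Ln] [DecidableEq Pt]
    (Inc : Pt → Ln → Prop) [∀ p l, Decidable (Inc p l)]
    (v k lam mu : ℕ) (hk : 3 ≤ k)
    (hv : Fintype.card Pt = v) (hb : Fintype.card Ln = v)
    (hpls : ∀ p q : Pt, p ≠ q →
      (Finset.univ.filter (fun l : Ln => Inc p l ∧ Inc q l)).card ≤ 1)
    (hpdeg : ∀ p : Pt, (Finset.univ.filter (fun l : Ln => Inc p l)).card = k)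
    (hldeg : ∀ l : Ln, (Finset.univ.filter (fun p : Pt => Inc p l)).card = k)
    (hreg : ∀ p : Pt,
      (Finset.univ.filter (fun q : Pt => q ≠ p ∧ ∃ l, Inc p l ∧ Inc q l)).card
        = k * (k - 1))
    (hlam : ∀ p q : Pt, p ≠ q → (∃ l, Inc p l ∧ Inc q l) →
      (Finset.univ.filter (fun z : Pt => z ≠ p ∧ z ≠ q ∧
        (∃ l, Inc p l ∧ Inc z l) ∧ (∃ l, Inc q l ∧ Inc z l))).card = lam)
    (hmu : ∀ p q : Pt, p ≠ q → ¬ (∃ l, Inc p l ∧ Inc q l) →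
      (Finset.univ.filter (fun z : Pt => z ≠ p ∧ z ≠ q ∧
        (∃ l, Inc p l ∧ Inc z l) ∧ (∃ l, Inc q l ∧ Inc z l))).card = mu)
    (hmu0 : 0 < mu) (hmuk : mu < k * (k - 1))
    (heq : ((v : ℚ) - k) * ((lam : ℚ) + 1) = (k : ℚ) * ((k : ℚ) - 1) ^ 3) :
    ∀ (P : Pt) (ℓ : Ln), ¬ Inc P ℓ →
      ((Finset.univ.filter
          (fun m : Ln => Inc P m ∧ ∃ q : Pt, Inc q m ∧ Inc q ℓ)).card : ℚ)
        = (k : ℚ) * ((k : ℚ) - 1) ^ 2 / ((v : ℚ) - k) := by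
  classical
  -- uniqueness of the line through two distinct points
  have uniqueLine : ∀ (p q : Pt) (l1 l2 : Ln), p ≠ q → Inc p l1 → Inc q l1 →
      Inc p l2 → Inc q l2 → l1 = l2 := by
    intro p q l1 l2 hpq h1 h2 h3 h4
    have hcard := hpls p q hpq
    have hm1 : l1 ∈ Finset.univ.filter (fun l : Ln => Inc p l ∧ Inc q l) := by
      simp [h1, h2]
    have hm2 : l2 ∈ Finset.univ.filter (fun l : Ln => Inc p l ∧ Inc q l) := by
      simp [h3, h4]
    exact Finset.card_le_one.mp hcard _ hm1 _ hm2
  intro P₀ ℓ hP₀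
  set T : Finset Pt := Finset.univ.filter (fun q => Inc q ℓ) with hTdef
  set S : Finset Pt := Finset.univ.filter (fun q => ¬ Inc q ℓ) with hSdef
  have hTcard : T.card = k := hldeg ℓ
  have hST : T.card + S.card = v := by
    rw [← hv, hTdef, hSdef]
    exact Finset.card_filter_add_card_filter_not _
  set f : Pt → ℕ := fun P => (T.filter (fun q => ∃ m, Inc P m ∧ Inc q m)).card
    with hfdef
  -- the goal count equals f P for P off ℓ
  have hbij : ∀ P : Pt, ¬ Inc P ℓ →
      (Finset.univ.filter
        (fun m : Ln => Inc P m ∧ ∃ q : Pt, Inc q m ∧ Inc q ℓ)).card = f P := by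
    intro P hP
    apply Finset.card_bij (fun m hm => Classical.choose
      (by exact (Finset.mem_filter.mp hm).2.2 : ∃ q : Pt, Inc q m ∧ Inc q ℓ))
    · intro m hm
      obtain ⟨hq1, hq2⟩ := Classical.choose_spec (Finset.mem_filter.mp hm).2.2
      have hPm := (Finset.mem_filter.mp hm).2.1
      simp only [hfdef, Finset.mem_filter, hTdef, Finset.mem_univ, true_and]
      exact ⟨hq2, m, hPm, hq1⟩
    · intro m1 hm1 m2 hm2 heq'
      obtain ⟨hq1, hq2⟩ := Classical.choose_spec (Finset.mem_filter.mp hm1).2.2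
      obtain ⟨hq1', hq2'⟩ := Classical.choose_spec (Finset.mem_filter.mp hm2).2.2
      rw [heq'] at hq1
      have hPm1 := (Finset.mem_filter.mp hm1).2.1
      have hPm2 := (Finset.mem_filter.mp hm2).2.1
      have hne : P ≠ Classical.choose (Finset.mem_filter.mp hm2).2.2 := by
        intro h; rw [h] at hP; exact hP hq2'
      exact uniqueLine _ _ _ _ hne hPm1 hq1 hPm2 hq1'
    · intro q hq
      simp only [hfdef, Finset.mem_filter, hTdef, Finset.mem_univ, true_and] at hq
      obtain ⟨hqℓ, m, hPm, hqm⟩ := hq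
      have hms : m ∈ Finset.univ.filter
          (fun m : Ln => Inc P m ∧ ∃ q : Pt, Inc q m ∧ Inc q ℓ) := by
        simp only [Finset.mem_filter, Finset.mem_univ, true_and]
        exact ⟨hPm, q, hqm, hqℓ⟩
      refine ⟨m, hms, ?_⟩
      obtain ⟨hq1, hq2⟩ := Classical.choose_spec (Finset.mem_filter.mp hms).2.2
      by_contra hne
      -- two distinct points on both m and ℓ, but m ≠ ℓ
      have : m = ℓ := uniqueLine _ _ _ _ hne hq1 hqm hq2 hqℓ
      rw [this] at hPm; exact hP hPm
  -- first moment, pointwise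
  have key1 : ∀ q ∈ T, (S.filter (fun P => ∃ m, Inc P m ∧ Inc q m)).card + (k - 1)
      = k * (k - 1) := by
    intro q hq
    have hqℓ : Inc q ℓ := (Finset.mem_filter.mp hq).2
    set N : Finset Pt :=
      Finset.univ.filter (fun z => z ≠ q ∧ ∃ l, Inc q l ∧ Inc z l) with hNdef
    have hNcard : N.card = k * (k - 1) := hreg q
    have hsplit := Finset.card_filter_add_card_filter_not
      (s := N) (fun z => Inc z ℓ)
    have hon : N.filter (fun z => Inc z ℓ) = T.erase q := by
      ext z
      simp only [hNdef, hTdef, Finset.mem_filter, Finset.mem_univ, true_and,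
        Finset.mem_erase]
      constructor
      · rintro ⟨⟨hzq, _⟩, hzl⟩; exact ⟨hzq, hzl⟩
      · rintro ⟨hzq, hzl⟩; exact ⟨⟨hzq, ℓ, hqℓ, hzl⟩, hzl⟩
    have hoff : N.filter (fun z => ¬ Inc z ℓ) =
        S.filter (fun P => ∃ m, Inc P m ∧ Inc q m) := by
      ext z
      simp only [hNdef, hSdef, Finset.mem_filter, Finset.mem_univ, true_and]
      constructor
      · rintro ⟨⟨hzq, l, h1, h2⟩, hzl⟩; exact ⟨hzl, l, h2, h1⟩
      · rintro ⟨hzl, l, h1, h2⟩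
        exact ⟨⟨fun h => hzl (h ▸ hqℓ), l, h2, h1⟩, hzl⟩
    have herase : (T.erase q).card = k - 1 := by
      rw [Finset.card_erase_of_mem hq, hTcard]
    rw [hon, hoff, herase, hNcard] at hsplit
    omega
  -- second moment, pointwise over off-diagonal pairs
  have key2 : ∀ x ∈ T.offDiag,
      (S.filter (fun P => (∃ m, Inc P m ∧ Inc x.1 m) ∧
        (∃ m, Inc P m ∧ Inc x.2 m))).card + (k - 2) = lam := by
    intro x hx
    obtain ⟨hq, hr, hqr⟩ := Finset.mem_offDiag.mp hx
    set q := x.1 with hq1def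
    set r := x.2 with hq2def
    have hqℓ : Inc q ℓ := (Finset.mem_filter.mp hq).2
    have hrℓ : Inc r ℓ := (Finset.mem_filter.mp hr).2
    have hM := hlam q r hqr ⟨ℓ, hqℓ, hrℓ⟩
    set M : Finset Pt := Finset.univ.filter (fun z => z ≠ q ∧ z ≠ r ∧
      (∃ l, Inc q l ∧ Inc z l) ∧ (∃ l, Inc r l ∧ Inc z l)) with hMdef
    have hsplit := Finset.card_filter_add_card_filter_not
      (s := M) (fun z => Inc z ℓ)
    have hon : M.filter (fun z => Inc z ℓ) = (T.erase q).erase r := by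
      ext z
      simp only [hMdef, hTdef, Finset.mem_filter, Finset.mem_univ, true_and,
        Finset.mem_erase]
      constructor
      · rintro ⟨⟨hzq, hzr, _, _⟩, hzl⟩; exact ⟨hzr, hzq, hzl⟩
      · rintro ⟨hzr, hzq, hzl⟩
        exact ⟨⟨hzq, hzr, ⟨ℓ, hqℓ, hzl⟩, ⟨ℓ, hrℓ, hzl⟩⟩, hzl⟩
    have hoff : M.filter (fun z => ¬ Inc z ℓ) =
        S.filter (fun P => (∃ m, Inc P m ∧ Inc q m) ∧
          (∃ m, Inc P m ∧ Inc r m)) := by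
      ext z
      simp only [hMdef, hSdef, Finset.mem_filter, Finset.mem_univ, true_and]
      constructor
      · rintro ⟨⟨_, _, ⟨l1, h1, h2⟩, ⟨l2, h3, h4⟩⟩, hzl⟩
        exact ⟨hzl, ⟨l1, h2, h1⟩, ⟨l2, h4, h3⟩⟩
      · rintro ⟨hzl, ⟨l1, h1, h2⟩, ⟨l2, h3, h4⟩⟩
        exact ⟨⟨fun h => hzl (h ▸ hqℓ), fun h => hzl (h ▸ hrℓ),
          ⟨l1, h2, h1⟩, ⟨l2, h4, h3⟩⟩, hzl⟩
    have herase : ((T.erase q).erase r).card = k - 2 := by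
      have hr' : r ∈ T.erase q := Finset.mem_erase.mpr ⟨fun h => hqr h.symm, hr⟩
      rw [Finset.card_erase_of_mem hr', Finset.card_erase_of_mem hq, hTcard]
      omega
    rw [hon, hoff, herase, hM] at hsplit
    omega
  -- swap sums: first moment
  have sum1 : (∑ P ∈ S, f P) + k * (k - 1) = k * (k * (k - 1)) := by
    have hswap : ∑ P ∈ S, f P =
        ∑ q ∈ T, (S.filter (fun P => ∃ m, Inc P m ∧ Inc q m)).card := by
      simp only [hfdef, Finset.card_filter]
      rw [Finset.sum_comm]
    rw [hswap]
    calc (∑ q ∈ T, (S.filter (fun P => ∃ m, Inc P m ∧ Inc q m)).card) + k * (k-1)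
        = ∑ q ∈ T, ((S.filter (fun P => ∃ m, Inc P m ∧ Inc q m)).card + (k-1)) := by
          rw [Finset.sum_add_distrib, Finset.sum_const, hTcard, smul_eq_mul]
      _ = ∑ q ∈ T, (k * (k-1)) := Finset.sum_congr rfl key1
      _ = k * (k * (k-1)) := by rw [Finset.sum_const, hTcard, smul_eq_mul]
  -- offDiag counts
  have hTP_offDiag : ∀ P : Pt,
      (T.filter (fun q => ∃ m, Inc P m ∧ Inc q m)).offDiag =
      T.offDiag.filter (fun x => (∃ m, Inc P m ∧ Inc x.1 m) ∧
        (∃ m, Inc P m ∧ Inc x.2 m)) := by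
    intro P
    ext ⟨a, b⟩
    simp only [Finset.mem_offDiag, Finset.mem_filter]
    tauto
  have sum2 : (∑ P ∈ S, (T.filter (fun q => ∃ m, Inc P m ∧ Inc q m)).offDiag.card)
      + (k * (k - 1)) * (k - 2) = (k * (k - 1)) * lam := by
    have hToff : T.offDiag.card = k * (k - 1) := by
      rw [Finset.offDiag_card, hTcard]
      cases k with
      | zero => omega
      | succ n =>
        have h1 : (n+1) * (n+1) = (n+1) * n + (n+1) := Nat.mul_succ (n+1) n
        have h2 : n + 1 - 1 = n := Nat.succ_sub_one n
        rw [h2]; omega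
    have hswap : ∑ P ∈ S,
        (T.filter (fun q => ∃ m, Inc P m ∧ Inc q m)).offDiag.card =
        ∑ x ∈ T.offDiag, (S.filter (fun P => (∃ m, Inc P m ∧ Inc x.1 m) ∧
          (∃ m, Inc P m ∧ Inc x.2 m))).card := by
      simp only [hTP_offDiag, Finset.card_filter]
      rw [Finset.sum_comm]
    rw [hswap]
    calc (∑ x ∈ T.offDiag, (S.filter (fun P => (∃ m, Inc P m ∧ Inc x.1 m) ∧
            (∃ m, Inc P m ∧ Inc x.2 m))).card) + (k * (k-1)) * (k-2)
        = ∑ x ∈ T.offDiag, ((S.filter (fun P => (∃ m, Inc P m ∧ Inc x.1 m) ∧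
            (∃ m, Inc P m ∧ Inc x.2 m))).card + (k-2)) := by
          rw [Finset.sum_add_distrib, Finset.sum_const, hToff, smul_eq_mul]
      _ = ∑ _x ∈ T.offDiag, lam := Finset.sum_congr rfl key2
      _ = (k * (k-1)) * lam := by rw [Finset.sum_const, hToff, smul_eq_mul]
  -- pointwise square identity
  have key3 : ∀ P : Pt,
      (T.filter (fun q => ∃ m, Inc P m ∧ Inc q m)).offDiag.card + f P
        = f P * f P := by
    intro P
    have hfP : (T.filter (fun q => ∃ m, Inc P m ∧ Inc q m)).card = f P := rfl
    rw [Finset.offDiag_card, hfP]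
    have : f P ≤ f P * f P := by
      rcases Nat.eq_zero_or_pos (f P) with h | h
      · simp [h]
      · exact Nat.le_mul_of_pos_left _ h
    omega
  -- pass to ℚ
  have hk1 : ((k - 1 : ℕ) : ℚ) = (k : ℚ) - 1 := by
    have : (1:ℕ) ≤ k := by omega
    push_cast [Nat.cast_sub this]; ring
  have hk2 : ((k - 2 : ℕ) : ℚ) = (k : ℚ) - 2 := by
    have : (2:ℕ) ≤ k := by omega
    push_cast [Nat.cast_sub this]; ring
  have S1 : (∑ P ∈ S, (f P : ℚ)) = (k : ℚ) * ((k:ℚ) - 1) ^ 2 := by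
    have h := congrArg (fun n : ℕ => (n : ℚ)) sum1
    push_cast [hk1] at h
    linear_combination h
  have S2 : (∑ P ∈ S, (f P : ℚ) ^ 2) = (k : ℚ) * ((k:ℚ) - 1) * ((lam : ℚ) + 1) := by
    have h3 : (∑ P ∈ S, ((T.filter (fun q => ∃ m, Inc P m ∧ Inc q m)).offDiag.card : ℚ))
        + ∑ P ∈ S, (f P : ℚ) = ∑ P ∈ S, (f P : ℚ) ^ 2 := by
      rw [← Finset.sum_add_distrib]
      apply Finset.sum_congr rfl
      intro P _
      have := congrArg (fun n : ℕ => (n : ℚ)) (key3 P)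
      push_cast at this
      rw [sq]; linarith [this]
    have h2 := congrArg (fun n : ℕ => (n : ℚ)) sum2
    push_cast [hk1, hk2] at h2
    linear_combination h2 - h3 + S1
  -- cardinality of S
  have hvk : ((v : ℚ) - k) ≠ 0 := by
    intro h
    rw [h, zero_mul] at heq
    have hk3 : (3 : ℚ) ≤ (k : ℚ) := by exact_mod_cast hk
    nlinarith [heq]
  have hScard : ((S.card : ℚ)) = (v : ℚ) - k := by
    have h := congrArg (fun n : ℕ => (n : ℚ)) hST
    push_cast [hTcard] at h
    linarith [h]
  set α : ℚ := (k : ℚ) * ((k:ℚ) - 1) ^ 2 / ((v : ℚ) - k) with hαdef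
  -- variance is zero
  have hvar : ∑ P ∈ S, ((f P : ℚ) - α) ^ 2 = 0 := by
    have hexp : ∑ P ∈ S, ((f P : ℚ) - α) ^ 2 =
        (∑ P ∈ S, (f P : ℚ) ^ 2) - 2 * α * (∑ P ∈ S, (f P : ℚ))
          + (S.card : ℚ) * α ^ 2 := by
      have step : ∑ P ∈ S, ((f P : ℚ) - α) ^ 2 =
          ∑ P ∈ S, ((f P : ℚ) ^ 2 - 2 * α * (f P : ℚ) + α ^ 2) :=
        Finset.sum_congr rfl (fun P _ => by ring)
      rw [step, Finset.sum_add_distrib, Finset.sum_sub_distrib,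
        ← Finset.mul_sum, Finset.sum_const, nsmul_eq_mul]
    rw [hexp, S1, S2, hScard, hαdef]
    have hlam1 : (lam : ℚ) + 1 = (k : ℚ) * ((k:ℚ) - 1) ^ 3 / ((v:ℚ) - k) := by
      field_simp
      linarith [heq]
    rw [hlam1]
    field_simp
    ring
  -- conclude
  have hP₀S : P₀ ∈ S := by simp [hSdef, hP₀]
  have hzero : ((f P₀ : ℚ) - α) ^ 2 = 0 := by
    have := (Finset.sum_eq_zero_iff_of_nonneg
      (fun P _ => sq_nonneg ((f P : ℚ) - α))).mp hvar P₀ hP₀S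
    exact this
  have hfα : (f P₀ : ℚ) = α := by
    have h := pow_eq_zero_iff (n := 2) (by norm_num) |>.mp hzero
    linarith [h]
  rw [hbij P₀ hP₀]
  exact hfα
end
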